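/- arXiv:2111.08036 — 5 statements merged into one kernel-verified Lean document; each statement's English description precedes it below -/
import Mathlib

section
/- Let L/K be a finite Galois extension of fields with Galois group Γ = Gal(L/K), and let K′ be an intermediate field, K ⊆ K′ ⊆ L. Make Γ act on the commutative ring K′ ⊗_K L through the second tensor factor (σ acts as id ⊗ σ), and hence act by group automorphisms on the group of units (K′ ⊗_K L)ˣ. Then the first group cohomology group H¹(Γ, (K′ ⊗_K L)ˣ) is trivial. -/
/-!
Evaluation at the `K`-embeddings `σ : K' → L` identifies `K' ⊗[K] L` with `∏_σ L`: it is onto by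
Dedekind's independence of characters, hence bijective by counting dimensions, and `Γ` permutes the
factors transitively because every `σ` extends to an automorphism of `L`.

Given a cocycle `f`, the Noether element `b = ∑_g f(g) · g(1 ⊗ y)` satisfies `f(h) · h(b) = b`, so
`f` is the coboundary of `b⁻¹` once `b` is a unit. The component of `b` at the inclusion `K' ⊆ L`
is `∑_g f(g)_ι · g(y)`, which is nonzero for a suitable `y` by Dedekind's lemma once more (all
coefficients are nonzero), and the twisted invariance `f(h) · h(b) = b` carries this
non-vanishing over to the component at `h ∘ ι`, i.e. to every component.
-/

open TensorProduct

set_option synthInstance.maxHeartbeats 1000000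
set_option maxHeartbeats 1000000

/-- The action of a group `G` on the units of a monoid `M`, induced by an action
of `G` on `M` by monoid automorphisms. -/
def unitsMulDistribMulAction (G M : Type) [Group G] [Monoid M]
    [MulDistribMulAction G M] : MulDistribMulAction G Mˣ where
  smul g u := Units.map (MulDistribMulAction.toMonoidHom M g) u
  one_smul u := Units.ext (one_smul G (u : M))
  mul_smul g h u := Units.ext (mul_smul g h (u : M))
  smul_mul g u v := Units.ext (smul_mul' g (u : M) (v : M))
  smul_one g := Units.ext (smul_one g)

noncomputable def tensorUnitsCommGroup (K L : Type) [Field K] [Field L] [Algebra K L]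
    (K' : IntermediateField K L) : CommGroup (K' ⊗[K] L)ˣ :=
  letI : CommMonoid (K' ⊗[K] L) := inferInstance
  inferInstance

open groupCohomology

theorem LinearIndependent.span_range_swap_eq_top {ι X L : Type*} [Field L] [Fintype ι]
    {v : ι → X → L} (hv : LinearIndependent L v) :
    Submodule.span L (Set.range (Function.swap v)) = ⊤ := by
  classical
  by_contra h
  obtain ⟨φ, hφ0, hφ⟩ :=
    Submodule.exists_dual_map_eq_bot_of_lt_top (lt_top_iff_ne_top.2 h) inferInstance
  have hvanish (x : X) : φ (Function.swap v x) = 0 := by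
    have hx := Submodule.mem_map_of_mem (f := φ)
      (Submodule.subset_span (R := L) (Set.mem_range_self (f := Function.swap v) x))
    rw [hφ] at hx
    exact (Submodule.mem_bot L).1 hx
  have hcoeff : ∀ i, (φ fun j => if i = j then 1 else 0) = 0 := by
    refine Fintype.linearIndependent_iff.1 hv _ (funext fun x => ?_)
    simpa [LinearMap.pi_apply_eq_sum_univ φ (Function.swap v x), mul_comm] using hvanish x
  exact hφ0 (LinearMap.ext fun w => by
    simp [LinearMap.pi_apply_eq_sum_univ φ w, hcoeff])

section TensorProductEval

variable (K E L : Type*) [Field K] [Field E] [Field L] [Algebra K E] [Algebra K L]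

noncomputable def tensorProductEval : E ⊗[K] L →ₐ[K] (E →ₐ[K] L) → L :=
  Algebra.TensorProduct.productMap (AlgHom.pi fun σ => σ) (AlgHom.pi fun _ => AlgHom.id K L)

variable {K E L}

@[simp]
theorem tensorProductEval_tmul (a : E) (b : L) (σ : E →ₐ[K] L) :
    tensorProductEval K E L (a ⊗ₜ b) σ = σ a * b := rfl

theorem isUnit_of_tensorProductEval_ne_zero (hbij : Function.Bijective (tensorProductEval K E L))
    {x : E ⊗[K] L} (hx : ∀ σ, tensorProductEval K E L x σ ≠ 0) : IsUnit x :=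
  (isUnit_map_iff (AlgEquiv.ofBijective _ hbij) x).1 (Pi.isUnit_iff.2 fun σ => (hx σ).isUnit)

theorem tensorProductEval_units_ne_zero (u : (E ⊗[K] L)ˣ) (σ : E →ₐ[K] L) :
    tensorProductEval K E L u σ ≠ 0 :=
  (Pi.isUnit_iff.1 (u.isUnit.map (tensorProductEval K E L)) σ).ne_zero

theorem tensorProductEval_smul [MulSemiringAction (L ≃ₐ[K] L) (E ⊗[K] L)]
    (hact : ∀ (g : L ≃ₐ[K] L) (a : E) (b : L), g • (a ⊗ₜ[K] b) = a ⊗ₜ[K] g b)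
    (g : L ≃ₐ[K] L) (x : E ⊗[K] L) (σ : E →ₐ[K] L) :
    tensorProductEval K E L (g • x) ((g : L →ₐ[K] L).comp σ) = g (tensorProductEval K E L x σ) := by
  induction x using TensorProduct.induction_on with
  | zero => simp
  | tmul a b => simp [hact]
  | add x y hx hy => simp [smul_add, hx, hy]

variable [FiniteDimensional K E]

theorem tensorProductEval_surjective : Function.Surjective (tensorProductEval K E L) := by
  classical
  have hli : LinearIndependent L fun σ : E →ₐ[K] L => (σ : E → L) :=
    (linearIndependent_monoidHom E L).comp (fun σ : E →ₐ[K] L => (σ : E →* L))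
      AlgHom.coe_monoidHom_injective
  intro w
  have hw : w ∈ Submodule.span L (Set.range (Function.swap fun σ : E →ₐ[K] L => (σ : E → L))) :=
    hli.span_range_swap_eq_top ▸ Submodule.mem_top
  induction hw using Submodule.span_induction with
  | mem _ h =>
    obtain ⟨a, rfl⟩ := h
    exact ⟨a ⊗ₜ 1, funext fun σ => by simp [Function.swap]⟩
  | zero => exact ⟨0, map_zero _⟩
  | add _ _ _ _ hx hy =>
    obtain ⟨x, rfl⟩ := hx
    obtain ⟨y, rfl⟩ := hy
    exact ⟨x + y, map_add _ _ _⟩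
  | smul c _ _ hx =>
    obtain ⟨x, rfl⟩ := hx
    exact ⟨(1 ⊗ₜ c) * x, by rw [map_mul]; ext σ; simp [mul_comm]⟩

theorem tensorProductEval_bijective [FiniteDimensional K L]
    (hcard : Fintype.card (E →ₐ[K] L) = Module.finrank K E) :
    Function.Bijective (tensorProductEval K E L) := by
  refine ⟨?_, tensorProductEval_surjective⟩
  have hrank : Module.finrank K (E ⊗[K] L) = Module.finrank K ((E →ₐ[K] L) → L) := by
    rw [Module.finrank_tensorProduct, Module.finrank_pi_fintype, Finset.sum_const,
      Finset.card_univ, hcard, smul_eq_mul]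
  exact (LinearMap.injective_iff_surjective_of_finrank_eq_finrank
    (f := (tensorProductEval K E L).toLinearMap) hrank).2 tensorProductEval_surjective

end TensorProductEval

theorem exists_sum_mul_apply_ne_zero {K L : Type*} [Field K] [Field L] [Algebra K L]
    [Fintype (L ≃ₐ[K] L)] {c : (L ≃ₐ[K] L) → L} (hc : c ≠ 0) :
    ∃ y, ∑ g, c g * g y ≠ 0 := by
  have hli : LinearIndependent L fun g : L ≃ₐ[K] L => (g : L → L) :=
    (linearIndependent_monoidHom L L).comp (fun g : L ≃ₐ[K] L => (g : L →* L))
      fun _ _ hgh => AlgEquiv.ext (MonoidHom.ext_iff.1 hgh)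
  by_contra! h
  exact hc (funext <| Fintype.linearIndependent_iff.1 hli c (funext fun y => by simpa using h y))

theorem IntermediateField.exists_algEquiv_comp_val_eq {K L : Type*} [Field K] [Field L]
    [Algebra K L] [Normal K L] {K' : IntermediateField K L} (σ : K' →ₐ[K] L) :
    ∃ g : L ≃ₐ[K] L, (g : L →ₐ[K] L).comp K'.val = σ :=
  ⟨AlgEquiv.ofBijective (σ.liftNormal L) (AlgHom.normal_bijective K L L _),
    AlgHom.ext fun a => by simpa using σ.liftNormal_commutes L a⟩

theorem IntermediateField.card_algHom_eq_finrank {K L : Type*} [Field K] [Field L] [Algebra K L]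
    [FiniteDimensional K L] [IsGalois K L] (K' : IntermediateField K L) :
    Fintype.card (K' →ₐ[K] L) = Module.finrank K K' := by
  have : Algebra.IsSeparable K K' := Algebra.isSeparable_tower_bot_of_isSeparable K K' L
  refine AlgHom.card_of_splits K K' L fun x => ?_
  rw [← minpoly.algebraMap_eq (algebraMap K' L).injective x]
  exact Normal.splits inferInstance (x : L)

section Cocycles

attribute [local instance] unitsMulDistribMulAction

variable {G A : Type} [Group G] [Fintype G] [CommRing A] [MulSemiringAction G A]

theorem mul_smul_sum_mul_smul_of_isMulCocycle₁ {f : G → Aˣ} (hf : IsMulCocycle₁ f)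
    (h : G) (z : A) : f h * h • ∑ g, (f g : A) * g • z = ∑ g, (f g : A) * g • z := by
  have hf' (g : G) : (f h : A) * h • (f g : A) = f (h * g) := by
    rw [hf h g, mul_comm]; rfl
  simp_rw [Finset.smul_sum, smul_mul', smul_smul, Finset.mul_sum, ← mul_assoc, hf']
  exact Fintype.sum_bijective (h * ·) (Group.mulLeft_bijective h) _ _ fun _ => rfl

theorem isMulCoboundary₁_of_isUnit_sum {f : G → Aˣ} (hf : IsMulCocycle₁ f) (z : A)
    (hz : IsUnit (∑ g, (f g : A) * g • z)) : IsMulCoboundary₁ f := by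
  obtain ⟨b, hb⟩ := hz
  refine ⟨b⁻¹, fun g => ?_⟩
  have hgb : g • b = (f g)⁻¹ * b := by
    rw [eq_inv_mul_iff_mul_eq]
    have hinv := mul_smul_sum_mul_smul_of_isMulCocycle₁ hf g z
    rw [← hb] at hinv
    exact Units.ext hinv
  rw [smul_inv', hgb, mul_inv, inv_inv, mul_div_cancel_right]

end Cocycles

theorem groupCohomology.subsingleton_H1_ofMulDistribMulAction {G M : Type} [Group G]
    [CommGroup M] [MulDistribMulAction G M]
    (h : ∀ f : G → M, IsMulCocycle₁ f → IsMulCoboundary₁ f) :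
    Subsingleton (H1 (Rep.ofMulDistribMulAction G M)) := by
  refine subsingleton_of_forall_eq 0 fun y => H1_induction_on y fun x => (H1π_eq_zero_iff _).2 ?_
  exact (coboundariesOfIsMulCoboundary₁ (h _ (isMulCocycle₁_of_mem_cocycles₁ _ x.2))).2

section TensorGalois

attribute [local instance] unitsMulDistribMulAction tensorUnitsCommGroup

variable {K L : Type} [Field K] [Field L] [Algebra K L] [FiniteDimensional K L] [IsGalois K L]
  {K' : IntermediateField K L} [MulSemiringAction (L ≃ₐ[K] L) (K' ⊗[K] L)]

local notation "π" => tensorProductEval K K' L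

theorem isMulCoboundary₁_tensorProduct_intermediateField
    (hact : ∀ (g : L ≃ₐ[K] L) (a : K') (b : L), g • (a ⊗ₜ[K] b) = a ⊗ₜ[K] g b)
    {f : (L ≃ₐ[K] L) → (K' ⊗[K] L)ˣ} (hf : IsMulCocycle₁ f) : IsMulCoboundary₁ f := by
  obtain ⟨y, hy⟩ := exists_sum_mul_apply_ne_zero (K := K) (c := fun g => π (f g) K'.val)
    fun hc => tensorProductEval_units_ne_zero (f 1) K'.val (congrFun hc 1)
  set b := ∑ g, (f g : K' ⊗[K] L) * g • (1 ⊗ₜ y)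
  have hb : π b K'.val = ∑ g, π (f g) K'.val * g y := by simp [b, hact]
  refine isMulCoboundary₁_of_isUnit_sum hf (1 ⊗ₜ y)
    (isUnit_of_tensorProductEval_ne_zero
      (tensorProductEval_bijective (IntermediateField.card_algHom_eq_finrank K')) fun σ => ?_)
  obtain ⟨h, rfl⟩ := IntermediateField.exists_algEquiv_comp_val_eq σ
  have htwist := congrArg (π · ((h : L →ₐ[K] L).comp K'.val))
    (mul_smul_sum_mul_smul_of_isMulCocycle₁ hf h (1 ⊗ₜ y))
  simp only [map_mul, Pi.mul_apply, tensorProductEval_smul hact] at htwist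
  rw [← htwist]
  exact mul_ne_zero (tensorProductEval_units_ne_zero _ _) ((map_ne_zero h).2 (hb ▸ hy))

end TensorGalois

/-- Let `L/K` be a finite Galois extension of fields with Galois group
`Γ = Gal(L/K)`, and let `K'` be an intermediate field, `K ⊆ K' ⊆ L`.  Make `Γ` act on
the commutative ring `K' ⊗[K] L` through the second tensor factor (`σ` acts as
`id ⊗ σ`), hence by group automorphisms on the group of units `(K' ⊗[K] L)ˣ`.
Then the first group cohomology group `H¹(Γ, (K' ⊗[K] L)ˣ)` is trivial. -/
theorem stmt0 (K L : Type) [Field K] [Field L] [Algebra K L]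
    [FiniteDimensional K L] [IsGalois K L] (K' : IntermediateField K L)
    [MulSemiringAction (L ≃ₐ[K] L) (K' ⊗[K] L)]
    (hact : ∀ (σ : L ≃ₐ[K] L) (a : K') (b : L),
      σ • ((a : K') ⊗ₜ[K] b) = (a : K') ⊗ₜ[K] (σ b)) :
    Subsingleton
      (groupCohomology.H1
        (@Rep.ofMulDistribMulAction (L ≃ₐ[K] L) (K' ⊗[K] L)ˣ _
          (tensorUnitsCommGroup K L K')
          (unitsMulDistribMulAction (L ≃ₐ[K] L) (K' ⊗[K] L)))) :=
  @groupCohomology.subsingleton_H1_ofMulDistribMulAction _ _ _ (tensorUnitsCommGroup K L K')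
    (unitsMulDistribMulAction _ _) fun _ => isMulCoboundary₁_tensorProduct_intermediateField hact
end

section
/- Let G be a finite group acting on a finite nonempty type ι, acting on R = ℤ[xᵢ : i ∈ ι] by ring automorphisms permuting the variables, and let e₁ = Σᵢ xᵢ (a G-invariant element). Then the quotient map q : R → R/(e₁) restricts to a surjective ring homomorphism R^G → (R/(e₁))^G between invariant subrings, and its kernel is exactly the ideal e₁·R^G of R^G. Consequently R^G/(e₁·R^G) ≅ (R/(e₁))^G as rings. -/
set_option synthInstance.maxHeartbeats 1000000
set_option maxHeartbeats 1000000
open MvPolynomial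

/-- The subring of `G`-invariant elements of a ring `R` on which `G` acts by
ring automorphisms. -/
def fixedSubring (G R : Type) [Monoid G] [Ring R] [MulSemiringAction G R] :
    Subring R where
  carrier := {r | ∀ g : G, g • r = r}
  zero_mem' := fun g => smul_zero g
  one_mem' := fun g => smul_one g
  add_mem' := fun {a b} ha hb g => by rw [smul_add, ha g, hb g]
  mul_mem' := fun {a b} ha hb g => by rw [smul_mul', ha g, hb g]
  neg_mem' := fun {a} ha g => by rw [smul_neg, ha g]

lemma mem_fixedSubring {G R : Type} [Monoid G] [Ring R] [MulSemiringAction G R]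
    {r : R} : r ∈ fixedSubring G R ↔ ∀ g : G, g • r = r := Iff.rfl

/-- The restriction, to invariant subrings, of the quotient map `R → R ⧸ I` by a
`G`-stable ideal `I` (the action on the quotient being the induced one). -/
def resHom (G R : Type) [Group G] [CommRing R] [MulSemiringAction G R] (I : Ideal R)
    [MulSemiringAction G (R ⧸ I)]
    (hq : ∀ (g : G) (r : R),
      g • (Ideal.Quotient.mk I r) = Ideal.Quotient.mk I (g • r)) :
    fixedSubring G R →+* fixedSubring G (R ⧸ I) where
  toFun p := ⟨Ideal.Quotient.mk I (p : R), fun g => by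
    rw [hq]
    exact congrArg (Ideal.Quotient.mk I) (mem_fixedSubring.mp p.2 g)⟩
  map_one' := Subtype.ext (map_one (Ideal.Quotient.mk I))
  map_mul' x y := Subtype.ext (map_mul (Ideal.Quotient.mk I) _ _)
  map_zero' := Subtype.ext (map_zero (Ideal.Quotient.mk I))
  map_add' x y := Subtype.ext (map_add (Ideal.Quotient.mk I) _ _)

lemma e1_mem (G ι : Type) [Group G] [Fintype ι] [MulAction G ι]
    [MulSemiringAction G (MvPolynomial ι ℤ)]
    (hX : ∀ (g : G) (i : ι), g • (X i : MvPolynomial ι ℤ) = X (g • i)) :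
    (∑ i : ι, X i : MvPolynomial ι ℤ) ∈ fixedSubring G (MvPolynomial ι ℤ) := by
  intro g
  rw [Finset.smul_sum]
  simp only [hX]
  exact Fintype.sum_equiv (MulAction.toPerm g) _ _ (fun i => rfl)


section
variable {G ι : Type} [Group G] [Fintype ι] [MulAction G ι]
  [MulSemiringAction G (MvPolynomial ι ℤ)]

set_option linter.unusedSectionVars false

lemma smul_eq_rename (hX : ∀ (g : G) (i : ι), g • (X i : MvPolynomial ι ℤ) = X (g • i))
    (g : G) (p : MvPolynomial ι ℤ) :
    g • p = rename (fun i => g • i) p := by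
  have h : MulSemiringAction.toRingHom G (MvPolynomial ι ℤ) g
      = (rename (fun i => g • i) : MvPolynomial ι ℤ →ₐ[ℤ] MvPolynomial ι ℤ).toRingHom := by
    apply MvPolynomial.ringHom_ext
    · intro n
      rw [show (MvPolynomial.C n : MvPolynomial ι ℤ) = (n : MvPolynomial ι ℤ) from
        eq_intCast _ n, map_intCast, map_intCast]
    · intro i
      simpa using hX g i
  exact RingHom.congr_fun h p

/-- the action of `G` on exponent vectors (monomials) -/
noncomputable def mAct (g : G) (m : ι →₀ ℕ) : ι →₀ ℕ := m.mapDomain (fun i => g • i)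

lemma mAct_mul (g h : G) (m : ι →₀ ℕ) : mAct (g * h) m = mAct g (mAct h m) := by
  unfold mAct
  rw [← Finsupp.mapDomain_comp]
  congr 1
  funext i
  simp [mul_smul, Function.comp]

lemma mAct_one (m : ι →₀ ℕ) : mAct (1 : G) m = m := by
  unfold mAct
  have : (fun i : ι => (1 : G) • i) = id := by funext i; simp
  rw [this, Finsupp.mapDomain_id]

lemma mAct_inv_cancel (g : G) (m : ι →₀ ℕ) : mAct g (mAct g⁻¹ m) = m := by
  rw [← mAct_mul, mul_inv_cancel, mAct_one]

lemma coeff_smul_eq (hX : ∀ (g : G) (i : ι), g • (X i : MvPolynomial ι ℤ) = X (g • i))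
    (g : G) (p : MvPolynomial ι ℤ) (m : ι →₀ ℕ) :
    coeff m (g • p) = coeff (mAct g⁻¹ m) p := by
  conv_lhs => rw [← mAct_inv_cancel g m]
  rw [smul_eq_rename hX]
  exact coeff_rename_mapDomain _ (MulAction.injective g) p _

lemma coboundary [Finite G]
    (hX : ∀ (g : G) (i : ι), g • (X i : MvPolynomial ι ℤ) = X (g • i))
    (d : G → MvPolynomial ι ℤ) (hd : ∀ g h : G, d (g * h) = d g + g • d h) :
    ∃ s : MvPolynomial ι ℤ, ∀ g : G, d g = g • s - s := by
  classical
  haveI : Fintype G := Fintype.ofFinite G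
  -- d 1 = 0
  have hd1 : d 1 = 0 := by
    have h := hd 1 1
    rw [mul_one, one_smul] at h
    exact (left_eq_add.mp h)
  -- stabilizer vanishing
  have hstab : ∀ (τ : G) (m : ι →₀ ℕ), mAct τ m = m → coeff m (d τ) = 0 := by
    intro τ m hm
    have hminv : mAct τ⁻¹ m = m := by
      conv_lhs => rw [← hm]
      rw [← mAct_mul, inv_mul_cancel, mAct_one]
    have hpow : ∀ k : ℕ, coeff m (d (τ ^ k)) = k * coeff m (d τ) := by
      intro k
      induction k with
      | zero => simp [hd1]
      | succ n ih =>
        rw [pow_succ', hd τ (τ ^ n), coeff_add, coeff_smul_eq hX, hminv, ih]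
        push_cast
        ring
    have hord := hpow (orderOf τ)
    rw [pow_orderOf_eq_one, hd1] at hord
    have hne : (orderOf τ : ℤ) ≠ 0 := by
      exact_mod_cast (orderOf_pos τ).ne'
    simpa [coeff_zero] using (mul_eq_zero.mp hord.symm).resolve_left hne
  -- orbit setoid on monomials
  let st : Setoid (ι →₀ ℕ) :=
    ⟨fun m m' => ∃ g : G, mAct g m = m',
      ⟨fun m => ⟨1, mAct_one m⟩,
       fun {m m'} ⟨g, hg⟩ => ⟨g⁻¹, by rw [← hg, ← mAct_mul, inv_mul_cancel, mAct_one]⟩,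
       fun {a b c} ⟨g, hg⟩ ⟨h, hh⟩ => ⟨h * g, by rw [mAct_mul, hg, hh]⟩⟩⟩
  let rep : (ι →₀ ℕ) → (ι →₀ ℕ) := fun m => (Quotient.mk st m).out
  have rep_rel : ∀ m, ∃ g : G, mAct g (rep m) = m := fun m =>
    Quotient.exact (Quotient.out_eq (Quotient.mk st m))
  have rep_inv : ∀ (g : G) (m : ι →₀ ℕ), rep (mAct g m) = rep m := by
    intro g m
    show (Quotient.mk st (mAct g m)).out = (Quotient.mk st m).out
    congr 1
    exact Quotient.sound (⟨g⁻¹, by rw [← mAct_mul, inv_mul_cancel, mAct_one]⟩ :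
      st.r (mAct g m) m)
  let sel : (ι →₀ ℕ) → G := fun m => Classical.choose (rep_rel m)
  have hsel : ∀ m, mAct (sel m) (rep m) = m := fun m => Classical.choose_spec (rep_rel m)
  -- the coefficient function and its finite support
  let f : (ι →₀ ℕ) → ℤ := fun m => - coeff m (d (sel m))
  let S : Finset (ι →₀ ℕ) := Finset.univ.biUnion (fun g : G => (d g).support)
  have hf0 : ∀ m ∉ S, f m = 0 := by
    intro m hm
    have : m ∉ (d (sel m)).support := by
      intro h
      exact hm (Finset.mem_biUnion.mpr ⟨sel m, Finset.mem_univ _, h⟩)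
    simp only [f, MvPolynomial.notMem_support_iff.mp this, neg_zero]
  let r : MvPolynomial ι ℤ := ∑ m ∈ S, monomial m (f m)
  have hr : ∀ m, coeff m r = f m := by
    intro m
    simp only [r, MvPolynomial.coeff_sum, MvPolynomial.coeff_monomial]
    rw [Finset.sum_ite_eq' S m f]
    by_cases h : m ∈ S
    · simp [h]
    · simp [h, hf0 m h]
  refine ⟨r, fun g => ?_⟩
  apply MvPolynomial.ext
  intro b
  rw [coeff_sub, coeff_smul_eq hX, hr, hr]
  -- key identity
  set b₀ := rep b with hb0
  have hrep2 : rep (mAct g⁻¹ b) = b₀ := rep_inv g⁻¹ b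
  set σ₁ := sel b
  set σ₂ := sel (mAct g⁻¹ b)
  have h1 : mAct σ₁ b₀ = b := hsel b
  have h2 : mAct σ₂ b₀ = mAct g⁻¹ b := by
    have h := hsel (mAct g⁻¹ b); rwa [hrep2] at h
  set τ := σ₂⁻¹ * (g⁻¹ * σ₁) with hτ
  have hτfix : mAct τ b₀ = b₀ := by
    rw [hτ, mAct_mul, mAct_mul, h1, ← h2, ← mAct_mul, inv_mul_cancel, mAct_one]
  have hfact : σ₁ = g * (σ₂ * τ) := by
    rw [hτ]; group
  have key : coeff b (d σ₁) =
      coeff b (d g) + coeff (mAct g⁻¹ b) (d σ₂) := by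
    rw [hfact, hd g (σ₂ * τ), coeff_add, coeff_smul_eq hX,
      hd σ₂ τ, coeff_add, coeff_smul_eq hX]
    have : mAct σ₂⁻¹ (mAct g⁻¹ b) = b₀ := by
      rw [← h2, ← mAct_mul, inv_mul_cancel, mAct_one]
    rw [this, hstab τ b₀ hτfix, add_zero]
  simp only [f]
  rw [key]
  ring
end

/-- Let `G` be a finite group acting on a finite nonempty type `ι`, acting
on `R = ℤ[xᵢ : i ∈ ι]` by ring automorphisms permuting the variables, and let
`e₁ = Σᵢ xᵢ` (a `G`-invariant element).  Then the quotient map `q : R → R/(e₁)` restricts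
to a surjective ring homomorphism `R^G → (R/(e₁))^G` between the invariant subrings, its
kernel is exactly the ideal `e₁·R^G` of `R^G`, and consequently
`R^G/(e₁·R^G) ≅ (R/(e₁))^G` as rings. -/
theorem stmt2 (G ι : Type) [Group G] [Finite G] [Fintype ι] [Nonempty ι]
    [MulAction G ι] [MulSemiringAction G (MvPolynomial ι ℤ)]
    (hX : ∀ (g : G) (i : ι), g • (X i : MvPolynomial ι ℤ) = X (g • i))
    [MulSemiringAction G
      (MvPolynomial ι ℤ ⧸ Ideal.span {(∑ i : ι, X i : MvPolynomial ι ℤ)})]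
    (hq : ∀ (g : G) (r : MvPolynomial ι ℤ),
      g • (Ideal.Quotient.mk (Ideal.span {(∑ i : ι, X i : MvPolynomial ι ℤ)}) r)
        = Ideal.Quotient.mk (Ideal.span {(∑ i : ι, X i : MvPolynomial ι ℤ)}) (g • r)) :
    Function.Surjective
      (resHom G (MvPolynomial ι ℤ)
        (Ideal.span {(∑ i : ι, X i : MvPolynomial ι ℤ)}) hq) ∧
    RingHom.ker
      (resHom G (MvPolynomial ι ℤ)
        (Ideal.span {(∑ i : ι, X i : MvPolynomial ι ℤ)}) hq)
      = Ideal.span {(⟨∑ i : ι, X i, e1_mem G ι hX⟩ :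
          fixedSubring G (MvPolynomial ι ℤ))} ∧
    Nonempty
      ((fixedSubring G (MvPolynomial ι ℤ) ⧸
          Ideal.span {(⟨∑ i : ι, X i, e1_mem G ι hX⟩ :
            fixedSubring G (MvPolynomial ι ℤ))}) ≃+*
        fixedSubring G
          (MvPolynomial ι ℤ ⧸ Ideal.span {(∑ i : ι, X i : MvPolynomial ι ℤ)})) := by
  classical
  have he : ∀ g : G, g • (∑ i : ι, X i : MvPolynomial ι ℤ) = ∑ i : ι, X i :=
    e1_mem G ι hX
  have hne : (∑ i : ι, X i : MvPolynomial ι ℤ) ≠ 0 := by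
    intro h
    have h2 := congrArg (eval (fun _ : ι => (1 : ℤ))) h
    simp only [map_sum, eval_X, map_zero, Finset.sum_const, Finset.card_univ,
      nsmul_eq_mul, mul_one] at h2
    exact (Fintype.card_pos (α := ι)).ne' (by exact_mod_cast h2)
  have hsurj : Function.Surjective (resHom G (MvPolynomial ι ℤ) (Ideal.span {(∑ i : ι, X i : MvPolynomial ι ℤ)}) hq) := by
    intro y
    obtain ⟨r₀, hr₀⟩ := Ideal.Quotient.mk_surjective (y : MvPolynomial ι ℤ ⧸ Ideal.span {(∑ i : ι, X i : MvPolynomial ι ℤ)})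
    have hmem : ∀ g : G, g • r₀ - r₀ ∈ Ideal.span {(∑ i : ι, X i : MvPolynomial ι ℤ)} := by
      intro g
      rw [← Ideal.Quotient.eq_zero_iff_mem, map_sub, ← hq g r₀, hr₀, y.2 g, sub_self]
    choose t ht using fun g => Ideal.mem_span_singleton.mp (hmem g)
    have hd : ∀ g h : G, t (g * h) = t g + g • t h := by
      intro g h
      apply mul_left_cancel₀ hne
      have hsm : (∑ i : ι, X i : MvPolynomial ι ℤ) * (g • t h) = g • ((∑ i : ι, X i) * t h) := by
        rw [smul_mul', he g]
      rw [mul_add, hsm, ← ht, ← ht, ← ht, smul_sub, ← mul_smul]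
      abel
    obtain ⟨s, hs⟩ := coboundary hX t hd
    have hwfix : (r₀ - (∑ i : ι, X i) * s) ∈ fixedSubring G (MvPolynomial ι ℤ) := by
      intro g
      have hr : g • r₀ = r₀ + (∑ i : ι, X i) * (g • s - s) := by
        rw [← hs g, ← ht g]; ring
      rw [smul_sub, smul_mul', he g, hr]
      ring
    refine ⟨⟨r₀ - (∑ i : ι, X i) * s, hwfix⟩, Subtype.ext ?_⟩
    show Ideal.Quotient.mk (Ideal.span {(∑ i : ι, X i : MvPolynomial ι ℤ)}) (r₀ - (∑ i : ι, X i) * s)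
      = (y : MvPolynomial ι ℤ ⧸ Ideal.span {(∑ i : ι, X i : MvPolynomial ι ℤ)})
    rw [map_sub, hr₀, Ideal.Quotient.eq_zero_iff_mem.mpr
      (Ideal.mem_span_singleton.mpr (dvd_mul_right _ s)), sub_zero]
  have hker : RingHom.ker (resHom G (MvPolynomial ι ℤ) (Ideal.span {(∑ i : ι, X i : MvPolynomial ι ℤ)}) hq)
      = Ideal.span {(⟨∑ i : ι, X i, e1_mem G ι hX⟩ :
          fixedSubring G (MvPolynomial ι ℤ))} := by
    ext p
    rw [RingHom.mem_ker, Ideal.mem_span_singleton]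
    constructor
    · intro hp
      have hp0 : Ideal.Quotient.mk (Ideal.span {(∑ i : ι, X i : MvPolynomial ι ℤ)}) (p : MvPolynomial ι ℤ) = 0 :=
        congrArg Subtype.val hp
      obtain ⟨u, hu⟩ := Ideal.mem_span_singleton.mp (Ideal.Quotient.eq_zero_iff_mem.mp hp0)
      have huinv : u ∈ fixedSubring G (MvPolynomial ι ℤ) := by
        intro g
        apply mul_left_cancel₀ hne
        have hsm : (∑ i : ι, X i : MvPolynomial ι ℤ) * (g • u) = g • ((∑ i : ι, X i) * u) := by
          rw [smul_mul', he g]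
        rw [hsm, ← hu, p.2 g, hu]
      exact ⟨⟨u, huinv⟩, Subtype.ext hu⟩
    · rintro ⟨c, hc⟩
      apply Subtype.ext
      show Ideal.Quotient.mk (Ideal.span {(∑ i : ι, X i : MvPolynomial ι ℤ)}) (p : MvPolynomial ι ℤ) = 0
      have hpc : (p : MvPolynomial ι ℤ) = (∑ i : ι, X i) * (c : MvPolynomial ι ℤ) :=
        congrArg Subtype.val hc
      rw [hpc, Ideal.Quotient.eq_zero_iff_mem.mpr
        (Ideal.mem_span_singleton.mpr (dvd_mul_right _ _))]
  refine ⟨hsurj, hker, ?_⟩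
  rw [← hker]
  exact ⟨RingHom.quotientKerEquivOfSurjective hsurj⟩
end

section
/- Fix an integer n ≥ 4. A homogeneous polynomial P ∈ R of degree 2 satisfies φ_σ(P) = P for all σ ∈ Sₙ if and only if P is a ℤ-linear combination of the four polynomials: s₁ = Σᵢ ((aᵢ⁺)² + (aᵢ⁻)²), s₂ = Σᵢ aᵢ⁺aᵢ⁻, s₃ = Σ_{i<j} (aᵢ⁺aⱼ⁺ + aᵢ⁻aⱼ⁻), and s₄ = Σ_{i<j} (aᵢ⁺aⱼ⁻ + aᵢ⁻aⱼ⁺). -/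
set_option synthInstance.maxHeartbeats 1000000
set_option maxHeartbeats 1000000

open MvPolynomial

/-- The signed permutation of the `2n` variables `aᵢ⁺ = (i, true)`, `aᵢ⁻ = (i, false)`
associated to `σ ∈ Sₙ`: it sends `aᵢ^ε` to `a_{σ(i)}^{ε·sgn σ}`. -/
def signedVar {n : ℕ} (σ : Equiv.Perm (Fin n)) (p : Fin n × Bool) : Fin n × Bool :=
  (σ p.1, if Equiv.Perm.sign σ = 1 then p.2 else !p.2)

/-- The ring automorphism `φ_σ` of `R = ℤ[a₁⁺, a₁⁻, …, aₙ⁺, aₙ⁻]` induced by the signed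
permutation action of `σ ∈ Sₙ` on the variables. -/
noncomputable def phi {n : ℕ} (σ : Equiv.Perm (Fin n)) :
    MvPolynomial (Fin n × Bool) ℤ →ₐ[ℤ] MvPolynomial (Fin n × Bool) ℤ :=
  MvPolynomial.rename (signedVar σ)

/-! The signed action of `Sₙ` on the degree-two monomials `a_u a_v` has four orbits, represented
by `(a₀⁺)²`, `a₀⁺a₀⁻`, `a₀⁺a₁⁺` and `a₀⁺a₁⁻`, and `s₁, …, s₄` are their orbit sums. That there are
no more orbits uses `n ≥ 4`: the alternating group is then `2`-transitive, so two distinct indices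
can be moved to any two distinct indices by a permutation of either sign. An invariant quadric
therefore has constant coefficients along each orbit, and agrees with the combination of
`s₁, …, s₄` having the same coefficients at the four representatives. -/

open Equiv Finset

theorem Equiv.Perm.exists_apply_eq_apply_eq_sign_eq {α : Type*} [Fintype α] [DecidableEq α]
    (hα : 4 ≤ Fintype.card α) {a b i j : α} (hab : a ≠ b) (hij : i ≠ j) (s : ℤˣ) :
    ∃ σ : Perm α, σ a = i ∧ σ b = j ∧ sign σ = s := by
  have := alternatingGroup.isMultiplyPretransitive α
  have : MulAction.IsMultiplyPretransitive (alternatingGroup α) α 2 :=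
    MulAction.isMultiplyPretransitive_of_le (n := Nat.card α - 2)
      (by rw [Nat.card_eq_fintype_card]; omega) (by omega)
  rcases Int.units_eq_one_or s with rfl | rfl
  · obtain ⟨g, hga, hgb⟩ := MulAction.is_two_pretransitive_iff.mp this hab hij
    exact ⟨g, hga, hgb, g.2⟩
  · obtain ⟨g, hga, hgb⟩ := MulAction.is_two_pretransitive_iff.mp this hab hij.symm
    refine ⟨swap i j * g, ?_, ?_, ?_⟩
    · simp [Perm.mul_apply, show (g : Perm α) a = j from hga]
    · simp [Perm.mul_apply, show (g : Perm α) b = i from hgb]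
    · simp [sign_swap hij, mem_alternatingGroup.mp g.2]

theorem Equiv.Perm.exists_apply_eq_sign_eq {α : Type*} [Fintype α] [DecidableEq α]
    (hα : 4 ≤ Fintype.card α) (a i : α) (s : ℤˣ) : ∃ σ : Perm α, σ a = i ∧ sign σ = s := by
  have : Nontrivial α := Fintype.one_lt_card_iff_nontrivial.mp (by omega)
  obtain ⟨b, hb⟩ := exists_ne a
  obtain ⟨j, hj⟩ := exists_ne i
  obtain ⟨σ, hσa, -, hσ⟩ := exists_apply_eq_apply_eq_sign_eq hα hb.symm hj.symm s
  exact ⟨σ, hσa, hσ⟩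

theorem Finset.sum_sum_Ioi_eq_single {α M : Type*} [Fintype α] [LinearOrder α]
    [LocallyFiniteOrderTop α] [AddCommMonoid M] {f : α → α → M} {a b : α} (hab : a < b)
    (hf : ∀ i j, i < j → (i, j) ≠ (a, b) → f i j = 0) :
    ∑ i, ∑ j ∈ Ioi i, f i j = f a b := by
  rw [sum_eq_single a, sum_eq_single b]
  · exact fun j hj hjb => hf a j (mem_Ioi.mp hj) (by simp [hjb])
  · exact fun hb => absurd (mem_Ioi.mpr hab) hb
  · exact fun i _ hia => sum_eq_zero fun j hj => hf i j (mem_Ioi.mp hj) (by simp [hia])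
  · simp

theorem Finset.sum_sum_Ioi_comp_perm {α M : Type*} [Fintype α] [LinearOrder α]
    [LocallyFiniteOrderTop α] [AddCommMonoid M] {f : α → α → M} (hf : ∀ i j, f i j = f j i)
    (σ : Perm α) : ∑ i, ∑ j ∈ Ioi i, f (σ i) (σ j) = ∑ i, ∑ j ∈ Ioi i, f i j := by
  have sum_eq_sum_sym2 : ∀ {g : α → α → M} (hg : ∀ i j, g i j = g j i),
      ∑ i, ∑ j ∈ Ioi i, g i j =
        ∑ z ∈ (univ : Finset α).sym2 with ¬z.IsDiag, Sym2.lift ⟨g, hg⟩ z := by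
    intro g hg
    simp only [sum_sym2_filter_not_isDiag, Sym2.lift_mk]
    exact (sum_finset_product' _ _ _ fun p => by simpa using ne_of_lt).symm
  rw [sum_eq_sum_sym2 hf, sum_eq_sum_sym2 (g := fun i j => f (σ i) (σ j)) fun i j => hf _ _]
  refine sum_nbij' (Sym2.map σ) (Sym2.map σ.symm) ?_ ?_ ?_ ?_ ?_
  · simp [Sym2.isDiag_map σ.injective]
  · simp [Sym2.isDiag_map σ.symm.injective]
  · simp [Sym2.map_map]
  · simp [Sym2.map_map]
  · rintro ⟨i, j⟩ -
    rfl

theorem Finsupp.exists_eq_single_add_single_of_degree_eq_two {σ : Type*} {d : σ →₀ ℕ}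
    (hd : d.degree = 2) : ∃ u v, d = single u 1 + single v 1 := by
  classical
  obtain ⟨u, v, huv⟩ := Multiset.card_eq_two.mp ((card_toMultiset d).trans hd)
  refine ⟨u, v, ?_⟩
  rw [← toMultiset_toFinsupp d, huv, Multiset.insert_eq_cons, ← Multiset.singleton_add,
    Multiset.toFinsupp_add, Multiset.toFinsupp_singleton, Multiset.toFinsupp_singleton]

theorem MvPolynomial.coeff_single_add_single_X_mul_X {σ R : Type*} [CommSemiring R]
    [DecidableEq σ] (u v p q : σ) :
    coeff (Finsupp.single u 1 + Finsupp.single v 1) (X p * X q : MvPolynomial σ R) =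
      if p = u ∧ q = v ∨ p = v ∧ q = u then 1 else 0 := by
  rw [X, X, monomial_mul, one_mul, coeff_monomial]
  simp only [Finsupp.single_add_single_eq_single_add_single one_ne_zero one_ne_zero]
  simp

section

variable {n : ℕ}

theorem signedVar_injective (σ : Perm (Fin n)) : Function.Injective (signedVar σ) := by
  rintro ⟨i, x⟩ ⟨j, y⟩ h
  simp only [signedVar, Prod.mk.injEq, σ.injective.eq_iff] at h
  split_ifs at h <;> simp_all

-- Whether the two indices agree and whether the two signs agree are the orbit invariants.
theorem coeff_eq_coeff_of_forall_phi_eq (hn : 4 ≤ n) {P : MvPolynomial (Fin n × Bool) ℤ}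
    (hP : ∀ σ, phi σ P = P) {a b : Fin n} (hab : a ≠ b) (i j : Fin n) (x y : Bool) :
    coeff (Finsupp.single (i, x) 1 + Finsupp.single (j, y) 1) P =
      coeff (Finsupp.single (a, true) 1 + Finsupp.single (if i = j then a else b, x == y) 1) P := by
  have hcard : 4 ≤ Fintype.card (Fin n) := by simpa using hn
  obtain ⟨σ, hσa, hσb, hσ⟩ : ∃ σ : Perm (Fin n), σ a = i ∧ σ (if i = j then a else b) = j ∧
      Perm.sign σ = if x then 1 else -1 := by
    by_cases hij : i = j
    · obtain ⟨σ, hσa, hσ⟩ := Perm.exists_apply_eq_sign_eq hcard a i (if x then 1 else -1)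
      exact ⟨σ, hσa, by rw [if_pos hij, hσa, hij], hσ⟩
    · simpa only [if_neg hij] using Perm.exists_apply_eq_apply_eq_sign_eq hcard hab hij _
  rw [← coeff_rename_mapDomain _ (signedVar_injective σ) P (Finsupp.single (a, true) 1 + _),
    ← phi, hP σ]
  congr 1
  cases x <;> cases y <;>
    simp [Finsupp.mapDomain_add, Finsupp.mapDomain_single, signedVar, hσa, hσb, hσ]

theorem eq_of_forall_phi_eq_of_coeff_eq (hn : 4 ≤ n) {P Q : MvPolynomial (Fin n × Bool) ℤ}
    (hP : P.IsHomogeneous 2) (hQ : Q.IsHomogeneous 2) (hPσ : ∀ σ, phi σ P = P)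
    (hQσ : ∀ σ, phi σ Q = Q) {a b : Fin n} (hab : a ≠ b)
    (h : ∀ k ∈ ({a, b} : Finset (Fin n)), ∀ y,
      coeff (Finsupp.single (a, true) 1 + Finsupp.single (k, y) 1) P =
        coeff (Finsupp.single (a, true) 1 + Finsupp.single (k, y) 1) Q) :
    P = Q := by
  ext d
  by_cases hd : d.degree = 2
  · obtain ⟨⟨i, x⟩, ⟨j, y⟩, rfl⟩ := Finsupp.exists_eq_single_add_single_of_degree_eq_two hd
    rw [coeff_eq_coeff_of_forall_phi_eq hn hPσ hab, coeff_eq_coeff_of_forall_phi_eq hn hQσ hab]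
    exact h _ (by split_ifs <;> simp) _
  · rw [hP.coeff_eq_zero hd, hQ.coeff_eq_zero hd]

variable (n)

noncomputable def s₁ : MvPolynomial (Fin n × Bool) ℤ :=
  ∑ i : Fin n, (X (i, true) ^ 2 + X (i, false) ^ 2)

noncomputable def s₂ : MvPolynomial (Fin n × Bool) ℤ :=
  ∑ i : Fin n, X (i, true) * X (i, false)

noncomputable def s₃ : MvPolynomial (Fin n × Bool) ℤ :=
  ∑ i : Fin n, ∑ j ∈ Ioi i, (X (i, true) * X (j, true) + X (i, false) * X (j, false))

noncomputable def s₄ : MvPolynomial (Fin n × Bool) ℤ :=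
  ∑ i : Fin n, ∑ j ∈ Ioi i, (X (i, true) * X (j, false) + X (i, false) * X (j, true))

theorem isHomogeneous_s₁ : (s₁ n).IsHomogeneous 2 :=
  IsHomogeneous.sum _ _ _ fun _ _ =>
    ((isHomogeneous_X _ _).pow 2).add ((isHomogeneous_X _ _).pow 2)

theorem isHomogeneous_s₂ : (s₂ n).IsHomogeneous 2 :=
  IsHomogeneous.sum _ _ _ fun _ _ => (isHomogeneous_X _ _).mul (isHomogeneous_X _ _)

theorem isHomogeneous_s₃ : (s₃ n).IsHomogeneous 2 :=
  IsHomogeneous.sum _ _ _ fun _ _ => IsHomogeneous.sum _ _ _ fun _ _ =>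
    ((isHomogeneous_X _ _).mul (isHomogeneous_X _ _)).add
      ((isHomogeneous_X _ _).mul (isHomogeneous_X _ _))

theorem isHomogeneous_s₄ : (s₄ n).IsHomogeneous 2 :=
  IsHomogeneous.sum _ _ _ fun _ _ => IsHomogeneous.sum _ _ _ fun _ _ =>
    ((isHomogeneous_X _ _).mul (isHomogeneous_X _ _)).add
      ((isHomogeneous_X _ _).mul (isHomogeneous_X _ _))

variable {n} (σ : Perm (Fin n))

theorem phi_s₁ : phi σ (s₁ n) = s₁ n := by
  conv_rhs => rw [s₁, ← Equiv.sum_comp σ]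
  rcases Int.units_eq_one_or (Perm.sign σ) with h | h <;>
    simp [s₁, phi, signedVar, h, add_comm]

theorem phi_s₂ : phi σ (s₂ n) = s₂ n := by
  conv_rhs => rw [s₂, ← Equiv.sum_comp σ]
  rcases Int.units_eq_one_or (Perm.sign σ) with h | h <;>
    simp [s₂, phi, signedVar, h, mul_comm]

theorem phi_s₃ : phi σ (s₃ n) = s₃ n := by
  conv_rhs => rw [s₃, ← sum_sum_Ioi_comp_perm (fun i j => by ring) σ]
  rcases Int.units_eq_one_or (Perm.sign σ) with h | h <;>
    simp [s₃, phi, signedVar, h, add_comm]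

theorem phi_s₄ : phi σ (s₄ n) = s₄ n := by
  conv_rhs => rw [s₄, ← sum_sum_Ioi_comp_perm (fun i j => by ring) σ]
  rcases Int.units_eq_one_or (Perm.sign σ) with h | h <;>
    simp [s₄, phi, signedVar, h, add_comm]

theorem phi_linearCombination (c₁ c₂ c₃ c₄ : ℤ) :
    phi σ (c₁ • s₁ n + c₂ • s₂ n + c₃ • s₃ n + c₄ • s₄ n) =
      c₁ • s₁ n + c₂ • s₂ n + c₃ • s₃ n + c₄ • s₄ n := by
  simp only [map_add, map_smul, phi_s₁, phi_s₂, phi_s₃, phi_s₄]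

section coeff

variable (a k : Fin n) (y : Bool)

theorem coeff_s₁ : coeff (Finsupp.single (a, true) 1 + Finsupp.single (k, y) 1) (s₁ n) =
    if k = a ∧ y = true then 1 else 0 := by
  simp only [s₁, sq, coeff_sum, coeff_add, coeff_single_add_single_X_mul_X, Prod.mk.injEq]
  rw [sum_eq_single a (fun i _ hi => by simp [hi]) (by simp)]
  grind

theorem coeff_s₂ : coeff (Finsupp.single (a, true) 1 + Finsupp.single (k, y) 1) (s₂ n) =
    if k = a ∧ y = false then 1 else 0 := by
  simp only [s₂, coeff_sum, coeff_single_add_single_X_mul_X, Prod.mk.injEq]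
  rw [sum_eq_single a (fun i _ hi => by simp [hi]) (by simp)]
  grind

theorem coeff_s₃ (hak : a ≤ k) :
    coeff (Finsupp.single (a, true) 1 + Finsupp.single (k, y) 1) (s₃ n) =
      if a < k ∧ y = true then 1 else 0 := by
  simp only [s₃, coeff_sum, coeff_add, coeff_single_add_single_X_mul_X, Prod.mk.injEq]
  rcases hak.lt_or_eq with hak | rfl
  · rw [sum_sum_Ioi_eq_single hak]
    · cases y <;> simp [hak, hak.ne']
    · intro i j hij hne
      simp only [ne_eq, Prod.mk.injEq, not_and] at hne
      grind
  · simp only [lt_irrefl, false_and, if_false]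
    refine sum_eq_zero fun i _ => sum_eq_zero fun j hj => ?_
    have := (mem_Ioi.mp hj).ne'
    grind

theorem coeff_s₄ (hak : a ≤ k) :
    coeff (Finsupp.single (a, true) 1 + Finsupp.single (k, y) 1) (s₄ n) =
      if a < k ∧ y = false then 1 else 0 := by
  simp only [s₄, coeff_sum, coeff_add, coeff_single_add_single_X_mul_X, Prod.mk.injEq]
  rcases hak.lt_or_eq with hak | rfl
  · rw [sum_sum_Ioi_eq_single hak]
    · cases y <;> simp [hak, hak.ne']
    · intro i j hij hne
      simp only [ne_eq, Prod.mk.injEq, not_and] at hne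
      grind
  · simp only [lt_irrefl, false_and, if_false]
    refine sum_eq_zero fun i _ => sum_eq_zero fun j hj => ?_
    have := (mem_Ioi.mp hj).ne'
    grind

end coeff

theorem exists_eq_linearCombination_of_forall_phi_eq (hn : 4 ≤ n)
    {P : MvPolynomial (Fin n × Bool) ℤ} (hP : P.IsHomogeneous 2) (hPσ : ∀ σ, phi σ P = P) :
    ∃ c₁ c₂ c₃ c₄ : ℤ, P = c₁ • s₁ n + c₂ • s₂ n + c₃ • s₃ n + c₄ • s₄ n := by
  let a : Fin n := ⟨0, by omega⟩
  let b : Fin n := ⟨1, by omega⟩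
  have hab : a < b := Fin.mk_lt_mk.mpr one_pos
  let c (k : Fin n) (y : Bool) := coeff (Finsupp.single (a, true) 1 + Finsupp.single (k, y) 1) P
  refine ⟨c a true, c a false, c b true, c b false, ?_⟩
  refine eq_of_forall_phi_eq_of_coeff_eq hn hP ?_ hPσ
    (fun σ => phi_linearCombination σ _ _ _ _) hab.ne ?_
  · let H := homogeneousSubmodule (Fin n × Bool) ℤ 2
    exact add_mem (add_mem (add_mem (H.smul_mem _ (isHomogeneous_s₁ n))
      (H.smul_mem _ (isHomogeneous_s₂ n))) (H.smul_mem _ (isHomogeneous_s₃ n)))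
      (H.smul_mem _ (isHomogeneous_s₄ n))
  · simp only [mem_insert, mem_singleton, forall_eq_or_imp, forall_eq, Bool.forall_bool,
      coeff_add, coeff_smul, coeff_s₁, coeff_s₂, coeff_s₃ _ _ _ le_rfl, coeff_s₄ _ _ _ le_rfl,
      coeff_s₃ _ _ _ hab.le, coeff_s₄ _ _ _ hab.le]
    simp [c, hab, hab.ne']

end

/-- Fix `n ≥ 4`.  A homogeneous polynomial `P ∈ R` of degree `2` satisfies
`φ_σ(P) = P` for all `σ ∈ Sₙ` if and only if `P` is a `ℤ`-linear combination of
`s₁ = Σᵢ ((aᵢ⁺)² + (aᵢ⁻)²)`, `s₂ = Σᵢ aᵢ⁺aᵢ⁻`,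
`s₃ = Σ_{i<j} (aᵢ⁺aⱼ⁺ + aᵢ⁻aⱼ⁻)` and `s₄ = Σ_{i<j} (aᵢ⁺aⱼ⁻ + aᵢ⁻aⱼ⁺)`. -/
theorem stmt4 (n : ℕ) (hn : 4 ≤ n) (P : MvPolynomial (Fin n × Bool) ℤ)
    (hP : P.IsHomogeneous 2) :
    (∀ σ : Equiv.Perm (Fin n), phi σ P = P) ↔
      ∃ c₁ c₂ c₃ c₄ : ℤ,
        P = c₁ • (∑ i : Fin n, (X (i, true) ^ 2 + X (i, false) ^ 2))
          + c₂ • (∑ i : Fin n, X (i, true) * X (i, false))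
          + c₃ • (∑ i : Fin n, ∑ j ∈ Finset.Ioi i,
              (X (i, true) * X (j, true) + X (i, false) * X (j, false)))
          + c₄ • (∑ i : Fin n, ∑ j ∈ Finset.Ioi i,
              (X (i, true) * X (j, false) + X (i, false) * X (j, true))) := by
  constructor
  · exact exists_eq_linearCombination_of_forall_phi_eq hn hP
  · rintro ⟨c₁, c₂, c₃, c₄, rfl⟩
    exact fun σ => phi_linearCombination σ c₁ c₂ c₃ c₄
end

section
/- The polynomial w = xyz + x′y′z′ + e′zy′ + ez′y + z′e′x + zex′ + yx′e′ + y′xe ∈ R equals Σ_{g∈Q₈} g·(xyz), is fixed by the action of every element of Q₈, and satisfies π(w) = 0. -/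
set_option synthInstance.maxHeartbeats 1000000
set_option maxHeartbeats 1000000

open MvPolynomial QuaternionGroup

/-- The quaternion group `Q₈ = {1, −1, i, −i, j, −j, k, −k}` of order `8`.
Concretely, `1 = a 0`, `−1 = a 2`, `i = a 1`, `−i = a 3`, `j = xa 0`, `−j = xa 2`,
`k = xa 3`, `−k = xa 1`. -/
abbrev Q8 : Type := QuaternionGroup 2

/-- The polynomial ring `R = ℤ[u_g : g ∈ Q₈]`. -/
abbrev R8 : Type := MvPolynomial Q8 ℤ

/-- The action of `g ∈ Q₈` on `R` by the `ℤ`-algebra automorphism permuting the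
variables by left translation: `g • u_h = u_{g h}`. -/
noncomputable def act (g : Q8) : R8 →ₐ[ℤ] R8 :=
  rename (fun h : Q8 => g * h)

noncomputable def eV : R8 := X (a 0)
noncomputable def e'V : R8 := X (a 2)
noncomputable def xV : R8 := X (a 1)
noncomputable def x'V : R8 := X (a 3)
noncomputable def yV : R8 := X (xa 0)
noncomputable def y'V : R8 := X (xa 2)
noncomputable def zV : R8 := X (xa 3)
noncomputable def z'V : R8 := X (xa 1)

/-- The polynomial `w = xyz + x′y′z′ + e′zy′ + ez′y + z′e′x + zex′ + yx′e′ + y′xe`. -/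
noncomputable def w : R8 :=
  xV * yV * zV + x'V * y'V * z'V + e'V * zV * y'V + eV * z'V * yV
    + z'V * e'V * xV + zV * eV * x'V + yV * x'V * e'V + y'V * xV * eV


/-- The `ℤ`-algebra homomorphism `π : R → ℤ[X₀, X₁, X₂, X₃]` with `π(e) = X₀`,
`π(e′) = −X₀`, `π(x) = X₁`, `π(x′) = −X₁`, `π(y) = X₂`, `π(y′) = −X₂`, `π(z) = X₃`,
`π(z′) = −X₃`. -/
noncomputable def piQ : R8 →ₐ[ℤ] MvPolynomial (Fin 4) ℤ :=
  aeval (fun g : Q8 =>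
    match g with
    | .a i => if i = 0 then (X 0 : MvPolynomial (Fin 4) ℤ)
        else if i = 2 then - X 0 else if i = 1 then X 1 else - X 1
    | .xa i => if i = 0 then (X 2 : MvPolynomial (Fin 4) ℤ)
        else if i = 2 then - X 2 else if i = 3 then X 3 else - X 3)

/-!
The eight terms of `w` are the translates `g • (x y z)` for `g = 1, −1, i, −i, j, −j, k, −k`,
so `w` is the orbit sum of `x y z`; left multiplication by any `g` permutes `Q₈`, hence fixes
this sum. Since `π(u_{−g}) = −π(u_g)` and `−1` is central, `π` sends the translates by `g` and
by `−g` of the cubic `x y z` to opposite values, so they cancel in pairs.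
-/

theorem MvPolynomial.rename_mul_left_sum_rename_mul_left {G R : Type*} [Group G] [Fintype G]
    [CommSemiring R] (g : G) (p : MvPolynomial G R) :
    rename (g * ·) (∑ h : G, rename (h * ·) p) = ∑ h : G, rename (h * ·) p := by
  simp only [map_sum, rename_rename]
  exact Fintype.sum_equiv (Equiv.mulLeft g) _ _ fun h => by simp [Function.comp_def, mul_assoc]

lemma act_X (g h : Q8) : act g (X h) = X (g * h) :=
  rename_X _ _

lemma univ_Q8 : (Finset.univ : Finset Q8) = {a 0, a 2, a 1, a 3, xa 0, xa 2, xa 3, xa 1} := by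
  decide

lemma w_eq_sum_act : w = ∑ g : Q8, act g (xV * yV * zV) := by
  simp +decide only [univ_Q8, Finset.sum_insert, Finset.mem_insert, Finset.mem_singleton,
    Finset.sum_singleton, map_mul, act_X, w, eV, e'V, xV, x'V, yV, y'V, zV, z'V, add_assoc]
  -- what is left is the multiplication table of `Q₈`, which evaluates by `rfl`
  rfl

lemma piQ_w : piQ w = 0 := by
  -- `-a_zero` keeps `a 0` as a constructor, so that the `match` in `piQ` reduces
  simp +decide [w, piQ, eV, e'V, xV, x'V, yV, y'V, zV, z'V, -a_zero]

/-- The polynomial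
`w = xyz + x′y′z′ + e′zy′ + ez′y + z′e′x + zex′ + yx′e′ + y′xe ∈ R` equals
`Σ_{g ∈ Q₈} g·(xyz)`, is fixed by the action of every element of `Q₈`, and satisfies
`π(w) = 0`. -/
theorem stmt7 :
    w = ∑ g : Q8, act g (xV * yV * zV) ∧
    (∀ g : Q8, act g w = w) ∧
    piQ w = 0 := by
  refine ⟨w_eq_sum_act, fun g => ?_, piQ_w⟩
  rw [w_eq_sum_act]
  exact rename_mul_left_sum_rename_mul_left g _
end

section
/- Let d ∈ {1, 3}. Every homogeneous element of degree d of the subalgebra A that is fixed by the action of every element of Q₈ can be written as u + i·u + j·u + k·u for some homogeneous element u ∈ A of degree d with zero constant term. In particular, the Q₈-invariant homogeneous degree-1 elements of A are exactly the integer multiples of (e+e′) + (x+x′) + (y+y′) + (z+z′). -/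
set_option synthInstance.maxHeartbeats 1000000
set_option maxHeartbeats 1000000

open MvPolynomial QuaternionGroup

/-- The `ℤ`-subalgebra `A ⊆ R` generated by `e+e′, x+x′, y+y′, z+z′`. -/
noncomputable def Asub : Subalgebra ℤ R8 :=
  Algebra.adjoin ℤ ({eV + e'V, xV + x'V, yV + y'V, zV + z'V} : Set R8)

/-!
The subalgebra `A` is a polynomial ring on `s_v = u_g + u_{-g}`, indexed by the Klein four-group
`V = Q₈/{±1}`, and `Q₈` acts on `A` through `V`, which permutes the `s_v` by left translation.
A non-trivial element of `V` is a fixed-point-free involution of `V`, so it fixes no monomial of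
odd degree in the `s_v`. An invariant polynomial of odd degree is therefore a sum of full
`V`-orbits of monomials, and keeping one monomial out of every orbit gives `u`. In degree one
the four `s_v` form a single orbit.
-/

theorem Finsupp.even_degree_of_mapDomain_eq {σ : Type*} {τ : σ → σ}
    (hτ : Function.Involutive τ) (hfix : ∀ i, τ i ≠ i) {m : σ →₀ ℕ}
    (hm : m.mapDomain τ = m) : Even m.degree := by
  have hmτ (i : σ) : m (τ i) = m i := by
    rw [← Finsupp.mapDomain_apply hτ.injective m i, hm]
  rw [← ZMod.natCast_eq_zero_iff_even, Finsupp.degree_apply, Nat.cast_sum]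
  refine Finset.sum_involution (fun i _ => τ i) (fun i _ => ?_) (fun i _ _ => hfix i)
    (fun i hi => by simpa [hmτ] using hi) (fun i _ => hτ i)
  rw [hmτ, CharTwo.add_self_eq_zero]

namespace MvPolynomial

section MonomialAction

variable {G σ R : Type*} [Group G] [MulAction G σ] [CommSemiring R]

attribute [local instance] Finsupp.comapSMul Finsupp.comapMulAction

theorem coeff_rename_smul (g : G) (m : σ →₀ ℕ) (p : MvPolynomial σ R) :
    coeff m (rename (g • ·) p) = coeff (g⁻¹ • m) p := by
  conv_lhs => rw [← smul_inv_smul g m]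
  exact coeff_rename_mapDomain _ (MulAction.injective g) p _

theorem exists_eq_sum_rename_smul [Fintype G] (q : MvPolynomial σ R)
    (hq : ∀ g : G, rename (g • ·) q = q) (hfree : ∀ m ∈ q.support, ∀ g : G, g • m = m → g = 1) :
    ∃ r : MvPolynomial σ R, r.support ⊆ q.support ∧ q = ∑ g : G, rename (g • ·) r := by
  classical
  let rep (m : σ →₀ ℕ) : σ →₀ ℕ := (Quotient.mk (MulAction.orbitRel G _) m).out
  have rep_smul (g : G) (m : σ →₀ ℕ) : rep (g • m) = rep m :=
    congrArg Quotient.out (Quotient.sound (MulAction.mem_orbit m g))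
  have coeff_smul (g : G) (m : σ →₀ ℕ) : coeff (g • m) q = coeff m q := by
    conv_rhs => rw [← hq g⁻¹, coeff_rename_smul, inv_inv]
  -- `r` keeps the terms of `q` at one chosen representative of each orbit of monomials
  let r : MvPolynomial σ R := ∑ m ∈ q.support with rep m = m, monomial m (coeff m q)
  have coeff_r (m : σ →₀ ℕ) : coeff m r = if rep m = m then coeff m q else 0 := by
    simp only [r, coeff_sum, coeff_monomial, Finset.sum_ite_eq', Finset.mem_filter,
      mem_support_iff]
    by_cases hm : coeff m q = 0 <;> simp [hm]
  refine ⟨r, fun m hm => ?_, ?_⟩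
  · rw [mem_support_iff, coeff_r] at hm
    exact mem_support_iff.mpr fun h => hm (by simp [h])
  ext m
  simp only [coeff_sum, coeff_rename_smul, coeff_r, rep_smul, coeff_smul]
  by_cases hm : coeff m q = 0
  · simp [hm]
  obtain ⟨g₀, hg₀ : g₀ • m = rep m⟩ := Quotient.mk_out (s := MulAction.orbitRel G _) m
  have hsolve (g : G) : rep m = g⁻¹ • m ↔ g = g₀⁻¹ := by
    refine ⟨fun h => ?_, fun h => by rw [h, inv_inv, hg₀]⟩
    have := hfree m (mem_support_iff.mpr hm) (g * g₀) (by rw [mul_smul, hg₀, h, smul_inv_smul])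
    rw [eq_inv_iff_mul_eq_one, this]
  simp only [hsolve, Finset.sum_ite_eq', Finset.mem_univ, if_true]

theorem exists_isHomogeneous_eq_sum_rename_mul_left {V : Type*} [Group V] [Fintype V]
    (hV : ∀ g : V, g * g = 1) {d : ℕ} (hd : Odd d) {q : MvPolynomial V R}
    (hq : q.IsHomogeneous d) (hinv : ∀ g : V, rename (g * ·) q = q) :
    ∃ r : MvPolynomial V R, r.IsHomogeneous d ∧ q = ∑ g : V, rename (g * ·) r := by
  obtain ⟨r, hsupp, hr⟩ := exists_eq_sum_rename_smul (G := V) q hinv fun m hm g hmg => by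
    by_contra hg
    have heven := Finsupp.even_degree_of_mapDomain_eq (τ := (g * ·))
      (fun x => by simp only [← mul_assoc, hV, one_mul]) (fun x => mt mul_eq_right.mp hg) hmg
    rw [Finsupp.degree_apply, ← hq.degree_eq_sum_deg_support hm] at heven
    exact Nat.not_even_iff_odd.mpr hd heven
  exact ⟨r, fun m hm => hq (mem_support_iff.mp (hsupp (mem_support_iff.mpr hm))), hr⟩

end MonomialAction

theorem exists_sum_rename_mul_left_eq_smul {V R : Type*} [Group V] [Fintype V] [CommSemiring R]
    {r : MvPolynomial V R} (hr : r.IsHomogeneous 1) :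
    ∃ c : R, ∑ v : V, rename (v * ·) r = c • ∑ v : V, X v := by
  have hr' : r ∈ Submodule.span R (Set.range (X : V → MvPolynomial V R)) :=
    homogeneousSubmodule_one_eq_span_X (σ := V) (R := R) ▸ hr
  obtain ⟨c, rfl⟩ := (Submodule.mem_span_range_iff_exists_fun R).mp hr'
  have hX (w : V) : ∑ v : V, rename (v * ·) (X w : MvPolynomial V R) = ∑ v : V, X v := by
    simp only [rename_X]
    exact Equiv.sum_comp (Equiv.mulRight w) (fun v => (X v : MvPolynomial V R))
  refine ⟨∑ w, c w, ?_⟩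
  simp only [map_sum, map_smul]
  rw [Finset.sum_comm, Finset.sum_smul]
  simp only [← Finset.smul_sum, hX]

theorem aeval_homogeneousComponent {σ τ R : Type*} [CommRing R] {g : σ → MvPolynomial τ R}
    (hg : ∀ i, (g i).IsHomogeneous 1) (n : ℕ) (p : MvPolynomial σ R) :
    aeval g (homogeneousComponent n p) = homogeneousComponent n (aeval g p) := by
  induction p using MvPolynomial.induction_on' with
  | monomial d c =>
    have hd := (isHomogeneous_monomial (d := d) c rfl).aeval g hg
    rw [one_mul] at hd
    rw [homogeneousComponent_of_mem (isHomogeneous_monomial c rfl), homogeneousComponent_of_mem hd]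
    split_ifs <;> simp
  | add p q hp hq => simp only [map_add, hp, hq]

theorem exists_isHomogeneous_aeval_eq {σ τ R : Type*} [CommRing R] {g : σ → MvPolynomial τ R}
    (hg : ∀ i, (g i).IsHomogeneous 1) {p : MvPolynomial τ R}
    (hp : p ∈ (aeval g : MvPolynomial σ R →ₐ[R] MvPolynomial τ R).range)
    {n : ℕ} (hpn : p.IsHomogeneous n) :
    ∃ q : MvPolynomial σ R, q.IsHomogeneous n ∧ aeval g q = p := by
  obtain ⟨q, rfl : aeval g q = p⟩ := hp
  exact ⟨homogeneousComponent n q, homogeneousComponent_isHomogeneous n q,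
    by rw [aeval_homogeneousComponent hg, homogeneousComponent_eq_self hpn]⟩

section FiberSum

variable {σ τ R : Type*} [Fintype σ] [DecidableEq τ] [CommSemiring R]

noncomputable def fiberSum (π : σ → τ) (v : τ) : MvPolynomial σ R := ∑ h with π h = v, X h

theorem isHomogeneous_fiberSum (π : σ → τ) (v : τ) :
    (fiberSum π v : MvPolynomial σ R).IsHomogeneous 1 :=
  IsHomogeneous.sum _ _ _ fun h _ => isHomogeneous_X R h

theorem rename_fiberSum {π : σ → τ} (e : σ ≃ σ) (f : τ ≃ τ) (he : ∀ h, π (e h) = f (π h))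
    (v : τ) : rename e (fiberSum π v : MvPolynomial σ R) = fiberSum π (f v) := by
  simp only [fiberSum, map_sum, rename_X]
  exact Finset.sum_equiv e (by simp [he]) (fun _ _ => rfl)

theorem aeval_fiberSum_injective {π : σ → τ} (hπ : Function.Surjective π) :
    Function.Injective (aeval (fiberSum π) : MvPolynomial τ R →ₐ[R] MvPolynomial σ R) := by
  classical
  let s := Function.surjInv hπ
  let retraction : MvPolynomial σ R →ₐ[R] MvPolynomial τ R :=
    aeval fun h => if h = s (π h) then X (π h) else 0
  refine Function.LeftInverse.injective (g := retraction) fun p => ?_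
  suffices retraction.comp (aeval (fiberSum π)) = AlgHom.id R _ from
    AlgHom.congr_fun this p
  refine algHom_ext fun v => ?_
  have hs : π (s v) = v := Function.surjInv_eq hπ v
  simp only [AlgHom.comp_apply, aeval_X, fiberSum, map_sum, retraction, AlgHom.id_apply]
  rw [Finset.sum_eq_single_of_mem (s v) (by simp [hs]) (fun h hh hne => ?_)]
  · simp [hs]
  · rw [Finset.mem_filter] at hh
    simp [hh.2, hne]

end FiberSum

end MvPolynomial

open DihedralGroup

theorem DihedralGroup.mul_self_of_two (g : DihedralGroup 2) : g * g = 1 := by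
  revert g
  decide

theorem DihedralGroup.univ_two :
    (Finset.univ : Finset (DihedralGroup 2)) = {r 0, r 1, sr 0, sr 1} := by
  decide

theorem DihedralGroup.sum_two {M : Type*} [AddCommMonoid M] (f : DihedralGroup 2 → M) :
    ∑ v, f v = f (r 0) + f (r 1) + f (sr 0) + f (sr 1) := by
  rw [univ_two, Finset.sum_insert (by decide), Finset.sum_insert (by decide),
    Finset.sum_insert (by decide), Finset.sum_singleton, add_assoc, add_assoc]

-- The quotient of `Q₈` by its centre `{±1}`, realised as the Klein four-group `DihedralGroup 2`.
def Q8.toKlein : Q8 →* DihedralGroup 2 where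
  toFun
    | a i => r i.cast
    | xa i => sr i.cast
  map_one' := rfl
  map_mul' := by decide

theorem Q8.toKlein_surjective : Function.Surjective Q8.toKlein := by
  decide

noncomputable def aevalKlein : MvPolynomial (DihedralGroup 2) ℤ →ₐ[ℤ] R8 :=
  aeval (fiberSum Q8.toKlein)

theorem fiberSum_toKlein_of_filter_eq {v : DihedralGroup 2} {g g' : Q8}
    (h : Finset.univ.filter (fun h => Q8.toKlein h = v) = {g, g'}) (hne : g ≠ g') :
    fiberSum Q8.toKlein v = (X g + X g' : R8) := by
  rw [fiberSum, h, Finset.sum_pair hne]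

theorem fiberSum_toKlein_r_zero : fiberSum Q8.toKlein (r 0) = eV + e'V :=
  fiberSum_toKlein_of_filter_eq (by decide) (by decide)

theorem fiberSum_toKlein_r_one : fiberSum Q8.toKlein (r 1) = xV + x'V :=
  fiberSum_toKlein_of_filter_eq (by decide) (by decide)

theorem fiberSum_toKlein_sr_zero : fiberSum Q8.toKlein (sr 0) = yV + y'V :=
  fiberSum_toKlein_of_filter_eq (by decide) (by decide)

theorem fiberSum_toKlein_sr_one : fiberSum Q8.toKlein (sr 1) = zV + z'V :=
  fiberSum_toKlein_of_filter_eq (by decide) (by decide)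

theorem Asub_eq_range_aevalKlein : Asub = aevalKlein.range := by
  rw [Asub, aevalKlein, ← Algebra.adjoin_range_eq_range_aeval, ← Set.image_univ,
    ← Finset.coe_univ, univ_two]
  simp only [Finset.coe_insert, Finset.coe_singleton, Set.image_insert_eq, Set.image_singleton,
    fiberSum_toKlein_r_zero, fiberSum_toKlein_r_one, fiberSum_toKlein_sr_zero,
    fiberSum_toKlein_sr_one]

theorem aevalKlein_injective : Function.Injective aevalKlein :=
  aeval_fiberSum_injective Q8.toKlein_surjective

theorem isHomogeneous_aevalKlein {q : MvPolynomial (DihedralGroup 2) ℤ} {n : ℕ}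
    (hq : q.IsHomogeneous n) : (aevalKlein q).IsHomogeneous n :=
  one_mul n ▸ hq.aeval _ (isHomogeneous_fiberSum Q8.toKlein)

theorem act_aevalKlein (g : Q8) (q : MvPolynomial (DihedralGroup 2) ℤ) :
    act g (aevalKlein q) = aevalKlein (rename (Q8.toKlein g * ·) q) := by
  suffices (act g).comp aevalKlein = aevalKlein.comp (rename (Q8.toKlein g * ·)) from
    AlgHom.congr_fun this q
  refine algHom_ext fun v => ?_
  simp only [AlgHom.comp_apply, aevalKlein, aeval_X, rename_X, act]
  exact rename_fiberSum (Equiv.mulLeft g) (Equiv.mulLeft (Q8.toKlein g)) (map_mul _ g) v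

theorem aevalKlein_sum_rename_mul_left (q : MvPolynomial (DihedralGroup 2) ℤ) :
    aevalKlein (∑ v, rename (v * ·) q) = aevalKlein q + act (a 1) (aevalKlein q)
      + act (xa 0) (aevalKlein q) + act (xa 3) (aevalKlein q) := by
  have h1 : rename (r 0 * ·) q = q := by
    simp only [r_zero, one_mul]
    exact congrArg (· q) rename_id
  rw [map_sum, sum_two, h1, act_aevalKlein, act_aevalKlein, act_aevalKlein]
  rfl

theorem aevalKlein_sum_X :
    aevalKlein (∑ v, X v) = (eV + e'V) + (xV + x'V) + (yV + y'V) + (zV + z'V) := by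
  rw [sum_two]
  simp only [map_add, aevalKlein, aeval_X, fiberSum_toKlein_r_zero,
    fiberSum_toKlein_r_one, fiberSum_toKlein_sr_zero, fiberSum_toKlein_sr_one]

theorem exists_isHomogeneous_eq_aevalKlein_sum_rename {d : ℕ} (hd : Odd d) {p : R8}
    (hp : p ∈ Asub) (hh : p.IsHomogeneous d) (hinv : ∀ g : Q8, act g p = p) :
    ∃ r : MvPolynomial (DihedralGroup 2) ℤ,
      r.IsHomogeneous d ∧ p = aevalKlein (∑ v, rename (v * ·) r) := by
  rw [Asub_eq_range_aevalKlein] at hp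
  obtain ⟨q, hq, rfl⟩ := exists_isHomogeneous_aeval_eq (isHomogeneous_fiberSum _) hp hh
  have hq_inv (v : DihedralGroup 2) : rename (v * ·) q = q := by
    obtain ⟨g, rfl⟩ := Q8.toKlein_surjective v
    exact aevalKlein_injective (by rw [← act_aevalKlein, aevalKlein, hinv])
  obtain ⟨r, hr, rfl⟩ :=
    exists_isHomogeneous_eq_sum_rename_mul_left mul_self_of_two hd hq hq_inv
  exact ⟨r, hr, rfl⟩

/-- Let `d ∈ {1, 3}`.  Every homogeneous element of degree `d` of the
subalgebra `A` that is fixed by the action of every element of `Q₈` can be written as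
`u + i·u + j·u + k·u` for some homogeneous element `u ∈ A` of degree `d` with zero
constant term.  In particular, the `Q₈`-invariant homogeneous degree-1 elements of `A`
are exactly the integer multiples of `(e+e′) + (x+x′) + (y+y′) + (z+z′)`. -/
theorem stmt11 :
    (∀ d : ℕ, d = 1 ∨ d = 3 →
      ∀ p ∈ Asub, p.IsHomogeneous d → (∀ g : Q8, act g p = p) →
        ∃ u ∈ Asub, u.IsHomogeneous d ∧ MvPolynomial.constantCoeff u = 0 ∧
          p = u + act (a 1) u + act (xa 0) u + act (xa 3) u) ∧
    (∀ p : R8,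
      (p ∈ Asub ∧ p.IsHomogeneous 1 ∧ ∀ g : Q8, act g p = p) ↔
        ∃ c : ℤ, p = c • ((eV + e'V) + (xV + x'V) + (yV + y'V) + (zV + z'V))) := by
  refine ⟨fun d hd p hp hh hinv => ?_, fun p => ⟨fun ⟨hp, hh, hinv⟩ => ?_, ?_⟩⟩
  · obtain ⟨r, hr, rfl⟩ := exists_isHomogeneous_eq_aevalKlein_sum_rename
      (by rcases hd with rfl | rfl <;> decide) hp hh hinv
    refine ⟨aevalKlein r, Asub_eq_range_aevalKlein ▸ ⟨r, rfl⟩, isHomogeneous_aevalKlein hr,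
      ?_, aevalKlein_sum_rename_mul_left r⟩
    rw [constantCoeff_eq]
    exact (isHomogeneous_aevalKlein hr).coeff_eq_zero (by rcases hd with rfl | rfl <;> simp)
  · obtain ⟨r, hr, rfl⟩ := exists_isHomogeneous_eq_aevalKlein_sum_rename odd_one hp hh hinv
    obtain ⟨c, hc⟩ := exists_sum_rename_mul_left_eq_smul hr
    exact ⟨c, by rw [hc, map_smul, aevalKlein_sum_X]⟩
  · rintro ⟨c, rfl⟩
    rw [← aevalKlein_sum_X, ← map_zsmul]
    refine ⟨Asub_eq_range_aevalKlein ▸ ⟨_, rfl⟩, isHomogeneous_aevalKlein ?_, fun g => ?_⟩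
    · rw [smul_eq_C_mul]
      exact (IsHomogeneous.sum _ _ _ fun v _ => isHomogeneous_X ℤ v).C_mul c
    · rw [act_aevalKlein, map_zsmul, map_sum]
      simp only [rename_X]
      congr 2
      exact Equiv.sum_comp (Equiv.mulLeft (Q8.toKlein g)) _
end
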